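/- arXiv:2405.21014 — 6 statements merged into one kernel-verified Lean document; each statement's English description precedes it below -/
import Mathlib

section
/- Let K be a field and let O₁, O₂ be valuation subrings of K (possibly equal to K itself) which are both henselian as local rings. If the residue field of O₁ is finite and the residue field of O₂ is finite, then the two residue fields have the same characteristic. -/
/-!
Suppose the residue characteristics are `p ≠ q`. Since `k₂ = O₂/𝔪₂` is finite and
`y ↦ y ^ p - y` identifies `0` and `1`, some `c̄ ∈ k₂` is not of the form `y ^ p - y`.
Hensel's lemma in `O₂` lifts `c̄ / p` to a root of unity `t`, which then also lies in `O₁`.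
Now `p * t ∈ 𝔪₁`, so Hensel's lemma in `O₁` gives a root `a` of `X ^ p - X - p * t`. This
equation makes `a` integral over `O₂`, hence `a ∈ O₂`, and its residue solves
`y ^ p - y = c̄` in `k₂`, a contradiction.
-/

open IsLocalRing Polynomial

lemma exists_forall_pow_sub_self_ne {F : Type*} [Ring F] [Nontrivial F] [Finite F] {n : ℕ}
    (hn : n ≠ 0) : ∃ c : F, ∀ y : F, y ^ n - y ≠ c := by
  have : ¬ Function.Injective (fun y : F => y ^ n - y) := fun h =>
    zero_ne_one (h (by simp [hn]))
  simpa [Finite.injective_iff_surjective, Function.Surjective] using this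

namespace HenselianLocalRing

variable {R : Type*} [CommRing R] [HenselianLocalRing R]

lemma exists_isRoot_residue_eq {f : R[X]} (hf : f.Monic) {x : ResidueField R}
    (hx : aeval x f = 0) (hx' : aeval x (derivative f) ≠ 0) :
    ∃ a : R, f.IsRoot a ∧ residue R a = x := by
  have hensel := ((HenselianLocalRing.TFAE R).out 0 1).mp ‹_›
  exact hensel f hf x hx hx'

lemma exists_pow_eq_one_residue_eq {n : ℕ} (hn : (n : ResidueField R) ≠ 0)
    {x : ResidueField R} (hx : x ^ n = 1) : ∃ t : R, t ^ n = 1 ∧ residue R t = x := by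
  have hn0 : n ≠ 0 := by rintro rfl; exact hn Nat.cast_zero
  have hx0 : x ≠ 0 := by rintro rfl; simp [hn0] at hx
  obtain ⟨t, ht, hres⟩ := exists_isRoot_residue_eq (x := x)
    (monic_X_pow_sub_C (1 : R) hn0) (by simp [hx])
    (by simp [derivative_X_pow, hn, hx0])
  exact ⟨t, sub_eq_zero.mp (by simpa using ht), hres⟩

lemma exists_pow_card_sub_one_eq_one_residue_eq [Fintype (ResidueField R)]
    {x : ResidueField R} (hx : x ≠ 0) :
    ∃ t : R, t ^ (Fintype.card (ResidueField R) - 1) = 1 ∧ residue R t = x :=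
  exists_pow_eq_one_residue_eq
    (by rw [Nat.cast_pred Fintype.card_pos, FiniteField.cast_card_eq_zero]; simp)
    (FiniteField.pow_card_sub_one_eq_one x hx)

lemma exists_pow_sub_self_eq {p : ℕ} (hp : 1 < p) (hpR : (p : ResidueField R) = 0)
    {c : R} (hc : c ∈ maximalIdeal R) : ∃ a : R, a ^ p - a = c := by
  obtain ⟨a, ha, -⟩ := exists_isRoot_residue_eq (x := 0)
    (monic_X_pow_sub (p := X + C c) (by rw [degree_X_add_C]; exact_mod_cast hp))
    (by simp [(residue_eq_zero_iff c).mpr hc]; omega)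
    (by simp [derivative_X_pow, hpR])
  exact ⟨a, by simpa [sub_eq_zero, sub_add_eq_sub_sub] using ha⟩

end HenselianLocalRing

namespace ValuationSubring

variable {K : Type*} [Field K] (A : ValuationSubring K)

lemma mem_of_isIntegral {x : K} (hx : IsIntegral A x) : x ∈ A := by
  obtain ⟨y, rfl⟩ := IsIntegrallyClosed.isIntegral_iff.mp hx
  exact y.2

lemma mem_of_pow_eq_one {x : K} {n : ℕ} (hn : n ≠ 0) (hx : x ^ n = 1) : x ∈ A :=
  A.mem_of_isIntegral <| .of_pow (Nat.pos_of_ne_zero hn) (hx ▸ isIntegral_one)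

lemma mem_of_pow_sub_self_mem {x : K} {n : ℕ} (hn : 1 < n) (hx : x ^ n - x ∈ A) : x ∈ A := by
  refine A.mem_of_isIntegral ⟨X ^ n - (X + C ⟨_, hx⟩), monic_X_pow_sub ?_, ?_⟩
  · rw [degree_X_add_C]
    exact_mod_cast hn
  · simp

lemma exists_pow_sub_self_eq_natCast_mul_residue {O₁ O₂ : ValuationSubring K}
    [HenselianLocalRing O₁] {p : ℕ} (hp : 1 < p) (hpO₁ : (p : ResidueField O₁) = 0)
    (t : O₂) (ht : (t : K) ∈ O₁) :
    ∃ y : ResidueField O₂, y ^ p - y = p * residue O₂ t := by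
  obtain ⟨a, ha⟩ := HenselianLocalRing.exists_pow_sub_self_eq hp hpO₁
    (c := p * ⟨t, ht⟩) <|
      Ideal.mul_mem_right _ _ <| (residue_eq_zero_iff _).mp <| by rwa [map_natCast]
  have haK : (a : K) ^ p - a = p * t := by simpa using congrArg Subtype.val ha
  have haO₂ : (a : K) ∈ O₂ :=
    O₂.mem_of_pow_sub_self_mem hp (haK ▸ O₂.mul_mem _ _ (natCast_mem O₂ p) t.2)
  refine ⟨residue O₂ ⟨a, haO₂⟩, ?_⟩
  rw [← map_pow, ← map_sub, ← map_natCast (residue O₂), ← map_mul]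
  exact congrArg _ (Subtype.ext (by simpa using haK))

end ValuationSubring

/-- If a field `K` carries two henselian valuation subrings, each with finite
residue field, then the two residue fields have the same characteristic. -/
theorem two_henselian_finite_residue_same_char
    (K : Type*) [Field K] (O₁ O₂ : ValuationSubring K)
    [HenselianLocalRing O₁] [HenselianLocalRing O₂]
    (h₁ : Finite (IsLocalRing.ResidueField O₁))
    (h₂ : Finite (IsLocalRing.ResidueField O₂)) :
    ringChar (IsLocalRing.ResidueField O₁) = ringChar (IsLocalRing.ResidueField O₂) := by
  have := Fintype.ofFinite (ResidueField O₂)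
  set p := ringChar (ResidueField O₁)
  have hp : p.Prime := CharP.char_is_prime (ResidueField O₁) p
  by_contra hne
  have hpO₂ : (p : ResidueField O₂) ≠ 0 := by
    rw [Ne, ringChar.spec,
      Nat.prime_dvd_prime_iff_eq (CharP.char_is_prime (ResidueField O₂) _) hp]
    exact fun h => hne h.symm
  obtain ⟨c, hc⟩ := exists_forall_pow_sub_self_ne (F := ResidueField O₂) hp.ne_zero
  have hc0 : c ≠ 0 := fun h => hc 0 (by simp [h, hp.ne_zero])
  obtain ⟨t, ht, htc⟩ := HenselianLocalRing.exists_pow_card_sub_one_eq_one_residue_eq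
    (div_ne_zero hc0 hpO₂)
  have htO₁ : (t : K) ∈ O₁ :=
    O₁.mem_of_pow_eq_one (Nat.sub_ne_zero_of_lt Fintype.one_lt_card)
      (by simpa using congrArg Subtype.val ht)
  obtain ⟨y, hy⟩ := O₁.exists_pow_sub_self_eq_natCast_mul_residue hp.one_lt
    (ringChar.Nat.cast_ringChar) t htO₁
  exact hc y (by rw [hy, htc, mul_div_cancel₀ c hpO₂])
end

section
/- Let R be a commutative local ring and let I ⊆ J be ideals of R with J ≠ R. If the additive quotient group J/I is finite, then J is contained in the radical of I; that is, for every b ∈ J there exists n ≥ 1 with bⁿ ∈ I. -/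
/-!
If `b ∈ J`, pigeonhole in the finite group `J/I` gives `m < n` with `b^m - b^n ∈ I`, i.e.
`b^m (1 - b^(n-m)) ∈ I`. Since `J` is proper, `b` lies in the maximal ideal, so `1 - b^(n-m)` is a
unit and `b^m ∈ I`.
-/

theorem Submodule.exists_lt_sub_mem_of_finite_quotient {R M : Type*} [Ring R] [AddCommGroup M]
    [Module R M] (N : Submodule R M) [Finite (M ⧸ N)] (f : ℕ → M) :
    ∃ m n, m < n ∧ f m - f n ∈ N := by
  obtain ⟨m, n, hmn, hf⟩ := Set.finite_univ.exists_lt_map_eq_of_forall_mem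
    (f := fun k ↦ N.mkQ (f k)) fun _ ↦ Set.mem_univ _
  exact ⟨m, n, hmn, (Submodule.Quotient.eq N).mp hf⟩

theorem IsLocalRing.pow_mem_of_pow_sub_pow_mem {R : Type*} [CommRing R] [IsLocalRing R]
    {I : Ideal R} {b : R} (hb : b ∈ maximalIdeal R) {m n : ℕ} (hmn : m < n)
    (h : b ^ m - b ^ n ∈ I) : b ^ m ∈ I := by
  have hunit : IsUnit (1 - b ^ (n - m)) :=
    isUnit_one_sub_self_of_mem_nonunits _ <|
      (maximalIdeal R).pow_mem_of_mem hb _ (Nat.sub_pos_of_lt hmn)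
  rw [← I.mul_unit_mem_iff_mem hunit]
  convert h using 1
  rw [mul_sub, mul_one, ← pow_add, Nat.add_sub_cancel' hmn.le]

theorem ideal_le_radical_of_finite_quotient_general
    (R : Type*) [CommRing R] [IsLocalRing R]
    (I J : Ideal R) (hJ : J ≠ ⊤)
    (hfin : Finite (J ⧸ (Submodule.comap J.subtype I))) :
    ∀ b ∈ J, ∃ n : ℕ, 1 ≤ n ∧ b ^ n ∈ I := by
  intro b hb
  obtain ⟨m, n, hmn, hI⟩ := (Submodule.comap J.subtype I).exists_lt_sub_mem_of_finite_quotient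
    fun k ↦ (⟨b ^ (k + 1), J.pow_mem_of_mem hb _ k.succ_pos⟩ : J)
  exact ⟨m + 1, m.succ_pos,
    IsLocalRing.pow_mem_of_pow_sub_pow_mem (IsLocalRing.le_maximalIdeal hJ hb)
      (Nat.succ_lt_succ hmn) hI⟩

/-- In a local ring, if `I ⊆ J` are ideals with `J` proper and the additive
quotient `J/I` finite, then `J` is contained in the radical of `I`. -/
theorem ideal_le_radical_of_finite_quotient
    (R : Type*) [CommRing R] [IsLocalRing R]
    (I J : Ideal R) (hIJ : I ≤ J) (hJ : J ≠ ⊤)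
    (hfin : Finite (J ⧸ (Submodule.comap J.subtype I))) :
    ∀ b ∈ J, ∃ n : ℕ, 1 ≤ n ∧ b ^ n ∈ I :=
  ideal_le_radical_of_finite_quotient_general R I J hJ hfin
end

section
/- Let R be a commutative local ring and let 𝔭 ⊊ 𝔮 be prime ideals of R with the inclusion strict. Then the additive quotient group 𝔮/𝔭 is infinite. -/
/-! If `q/p` were finite, then for `x ∈ q` two of the classes of `x, x², x³, …` would
coincide, so `x ^ a * (1 - x ^ (b - a)) ∈ p` for some `a < b`. In a local ring
`1 - x ^ (b - a)` is a unit, hence `x ^ a ∈ p`: finiteness forces `q ≤ √p = p`. -/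

namespace IsLocalRing

variable {R : Type*} [CommRing R] [IsLocalRing R]

theorem pow_mem_of_pow_sub_pow_mem_s3 {I : Ideal R} {x : R} (hx : x ∈ maximalIdeal R) {a b : ℕ}
    (hab : a < b) (h : x ^ a - x ^ b ∈ I) : x ^ a ∈ I := by
  have hfactor : x ^ a - x ^ b = x ^ a * (1 - x ^ (b - a)) := by
    rw [mul_sub, mul_one, ← pow_add, Nat.add_sub_of_le hab.le]
  have hunit : IsUnit (1 - x ^ (b - a)) :=
    isUnit_one_sub_self_of_mem_nonunits _ ((maximalIdeal R).pow_mem_of_mem hx _ (by omega))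
  rwa [hfactor, Ideal.mul_unit_mem_iff_mem I hunit] at h

theorem le_radical_of_finite_quotient {I J : Ideal R} (hJ : J ≠ ⊤)
    [Finite (J ⧸ Submodule.comap J.subtype I)] : J ≤ I.radical := by
  intro x hx
  let powClass : ℕ → J ⧸ Submodule.comap J.subtype I := fun n =>
    Submodule.Quotient.mk ⟨x ^ (n + 1), J.pow_mem_of_mem hx _ n.succ_pos⟩
  obtain ⟨a, b, hab, hclass⟩ :=
    Set.Finite.exists_lt_map_eq_of_forall_mem (fun n => Set.mem_univ (powClass n)) Set.finite_univ
  have hdiff : x ^ (a + 1) - x ^ (b + 1) ∈ I :=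
    (Submodule.Quotient.eq (Submodule.comap J.subtype I)).mp hclass
  exact ⟨a + 1, pow_mem_of_pow_sub_pow_mem_s3 (le_maximalIdeal hJ hx) (by omega) hdiff⟩

end IsLocalRing

/-- In a local ring, if `𝔭 ⊊ 𝔮` are prime ideals, then the additive quotient
group `𝔮/𝔭` is infinite. -/
theorem quotient_of_strict_primes_infinite
    (R : Type*) [CommRing R] [IsLocalRing R]
    (p q : Ideal R) (hp : p.IsPrime) (hq : q.IsPrime) (hpq : p < q) :
    Infinite (q ⧸ (Submodule.comap q.subtype p)) := by
  rw [← not_finite_iff_infinite]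
  intro hfin
  have hle : q ≤ p := hp.radical ▸ IsLocalRing.le_radical_of_finite_quotient hq.ne_top
  exact hpq.not_ge hle
end

section
/- Let K be a field equipped with a topology making it a topological ring. If the topology is compact and Hausdorff, then K is finite. -/
/-- A field carrying a compact Hausdorff topological ring topology is finite. -/
theorem finite_of_compact_t2_topological_field
    (K : Type*) [Field K] [TopologicalSpace K] [IsTopologicalRing K]
    [CompactSpace K] [T2Space K] :
    Finite K :=
  DivisionRing.finite_of_compactSpace_of_t2Space
end

section
/- Let A be an infinite commutative topological ring whose topology is compact and Hausdorff, which is an integral domain, and such that for every nonzero a ∈ A the quotient ring A/aA is finite. Then every nonzero ideal I of A is both open and closed and has finite index (i.e. A/I is finite), while the zero ideal {0} is not open. -/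
/-!
A nonzero principal ideal `aA` is finitely generated, hence compact and therefore closed; having
finite index it is also open, being the complement of finitely many of its closed cosets. Every
nonzero ideal contains such an `aA`, so it is open, hence closed and (`A` being compact) of finite
index. Finally `{0}` cannot be open, since a compact discrete space is finite.
-/

theorem Ideal.isOpen_of_ne_bot {A : Type*} [CommRing A] [TopologicalSpace A]
    [IsTopologicalRing A] [CompactSpace A] [T2Space A]
    (hprin : ∀ a : A, a ≠ 0 → Finite (A ⧸ span {a})) {I : Ideal A} (hI : I ≠ ⊥) :
    IsOpen (I : Set A) := by
  obtain ⟨a, haI, ha⟩ := Submodule.exists_mem_ne_zero_of_ne_bot hI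
  have : (span {a}).toAddSubgroup.FiniteIndex :=
    @AddSubgroup.finiteIndex_of_finite_quotient _ _ _ (hprin a ha)
  have h_open : IsOpen ((span {a} : Ideal A) : Set A) :=
    (span {a}).toAddSubgroup.isOpen_of_isClosed_of_finiteIndex
      (isCompact_of_fg (Submodule.fg_span_singleton a)).isClosed
  exact Submodule.isOpen_mono ((span_singleton_le_iff_mem I).mpr haI) h_open

theorem not_isOpen_singleton_zero_of_infinite {G : Type*} [AddGroup G] [TopologicalSpace G]
    [IsTopologicalAddGroup G] [CompactSpace G] [Infinite G] : ¬ IsOpen ({0} : Set G) := by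
  intro h
  have : DiscreteTopology G := discreteTopology_iff_isOpen_singleton_zero.mpr h
  have : Finite G := finite_of_compact_of_discrete
  exact not_finite G

theorem clopen_finite_index_ideals_of_compact_domain_general
    (A : Type*) [CommRing A] [Infinite A]
    [TopologicalSpace A] [IsTopologicalRing A] [CompactSpace A] [T2Space A]
    (hprin : ∀ a : A, a ≠ 0 → Finite (A ⧸ Ideal.span {a})) :
    (∀ I : Ideal A, I ≠ ⊥ →
      IsOpen (I : Set A) ∧ IsClosed (I : Set A) ∧ Finite (A ⧸ I)) ∧
    ¬ IsOpen ({0} : Set A) := by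
  refine ⟨fun I hI ↦ ?_, not_isOpen_singleton_zero_of_infinite⟩
  have h_open := Ideal.isOpen_of_ne_bot hprin hI
  exact ⟨h_open, I.toAddSubgroup.isClosed_of_isOpen h_open,
    I.toAddSubgroup.quotient_finite_of_isOpen h_open⟩

/-- In an infinite compact Hausdorff integral domain in which every nonzero
principal ideal has finite index, every nonzero ideal is clopen of finite
index, while the zero ideal is not open. -/
theorem clopen_finite_index_ideals_of_compact_domain
    (A : Type*) [CommRing A] [IsDomain A] [Infinite A]
    [TopologicalSpace A] [IsTopologicalRing A] [CompactSpace A] [T2Space A]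
    (hprin : ∀ a : A, a ≠ 0 → Finite (A ⧸ Ideal.span {a})) :
    (∀ I : Ideal A, I ≠ ⊥ →
      IsOpen (I : Set A) ∧ IsClosed (I : Set A) ∧ Finite (A ⧸ I)) ∧
    ¬ IsOpen ({0} : Set A) :=
  clopen_finite_index_ideals_of_compact_domain_general A hprin
end

section
/- Let A be an infinite commutative topological ring whose topology is compact and Hausdorff, which is an integral domain, and such that for every nonzero a ∈ A the quotient ring A/aA is finite. Then A is not a field, and A is a local ring (it has a unique maximal ideal). -/
/-!
The unit group of a compact Hausdorff ring is compact, so the set of units is closed; in an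
infinite field this would make `{0}` open, hence the topology discrete and the ring finite.

For locality, let `a` be any element and `c = a * (1 - a)`. Then `a` is idempotent modulo the
principal ideal `c A`, which is closed by compactness. Idempotents lift modulo closed ideals: an
idempotent of the compact semigroup generated by `a` (Ellis–Numakura) lies in the closed coset
`a + c A`. In a domain the lift is `0` or `1`, which forces `1 - a` or `a` to be a unit.
-/

theorem isClosed_setOf_isUnit {M : Type*} [Monoid M] [TopologicalSpace M] [ContinuousMul M]
    [CompactSpace M] [T2Space M] : IsClosed {x : M | IsUnit x} :=
  (isCompact_range Units.continuous_val).isClosed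

theorem Ideal.isClosed_span_singleton {A : Type*} [Semiring A] [TopologicalSpace A]
    [ContinuousMul A] [CompactSpace A] [T2Space A] (c : A) :
    IsClosed (Ideal.span {c} : Set A) := by
  have h : (Ideal.span {c} : Set A) = Set.range (· * c) :=
    Set.ext fun _ => Ideal.mem_span_singleton'
  rw [h]
  exact (isCompact_range (continuous_mul_const c)).isClosed

theorem Ideal.exists_isIdempotentElem_sub_mem {A : Type*} [Ring A] [TopologicalSpace A]
    [IsTopologicalRing A] [CompactSpace A] [T2Space A] {I : Ideal A} (hI : IsClosed (I : Set A))
    {x : A} (hx : x * x - x ∈ I) : ∃ e, IsIdempotentElem e ∧ e - x ∈ I := by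
  set S := closure (Set.range fun n : ℕ => x ^ (n + 1))
  have hS_mul : ∀ u ∈ S, ∀ v ∈ S, u * v ∈ S := by
    refine fun u hu v hv => map_mem_closure₂ continuous_mul hu hv ?_
    rintro _ ⟨m, rfl⟩ _ ⟨n, rfl⟩
    exact ⟨m + n + 1, by rw [← pow_add]; ring_nf⟩
  obtain ⟨e, heS, he⟩ := exists_idempotent_in_compact_subsemigroup continuous_mul_const S
    ⟨x, subset_closure ⟨0, pow_one x⟩⟩ isClosed_closure.isCompact hS_mul
  have hpow : ∀ n : ℕ, x ^ (n + 1) - x ∈ I := by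
    intro n
    induction n with
    | zero => simp
    | succ n ih =>
      have h : x ^ (n + 1 + 1) - x = x * (x ^ (n + 1) - x) + (x * x - x) := by
        rw [pow_succ' x (n + 1)]
        noncomm_ring
      rw [h]
      exact I.add_mem (I.mul_mem_left x ih) hx
  have hcoset : IsClosed {y : A | y - x ∈ I} := hI.preimage (continuous_sub_right x)
  refine ⟨e, he, closure_minimal ?_ hcoset heS⟩
  rintro _ ⟨n, rfl⟩
  exact hpow n

theorem not_isField_of_compactSpace (A : Type*) [Ring A] [Infinite A] [TopologicalSpace A]
    [IsTopologicalRing A] [CompactSpace A] [T2Space A] : ¬IsField A := by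
  intro hA
  let := hA.toField
  have hzero : ({0} : Set A) = {x : A | IsUnit x}ᶜ := by
    ext x
    simp [isUnit_iff_ne_zero]
  have : DiscreteTopology A := discreteTopology_iff_isOpen_singleton_zero.mpr
    (hzero ▸ isClosed_setOf_isUnit.isOpen_compl)
  have : Finite A := finite_of_compact_of_discrete
  exact not_finite A

theorem isUnit_one_sub_of_mul_one_sub_dvd {A : Type*} [CommRing A] [IsDomain A] {a : A}
    (h : a * (1 - a) ∣ a) : IsUnit (1 - a) := by
  rcases eq_or_ne a 0 with rfl | ha
  · simp
  · exact isUnit_of_dvd_one ((mul_dvd_mul_iff_left ha).mp (by rwa [mul_one]))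

theorem isLocalRing_of_compactSpace (A : Type*) [CommRing A] [IsDomain A] [TopologicalSpace A]
    [IsTopologicalRing A] [CompactSpace A] [T2Space A] : IsLocalRing A := by
  refine IsLocalRing.of_isUnit_or_isUnit_one_sub_self fun a => ?_
  obtain ⟨e, he, hea⟩ := Ideal.exists_isIdempotentElem_sub_mem
    (Ideal.isClosed_span_singleton (a * (1 - a))) (x := a)
    (Ideal.mem_span_singleton.mpr ⟨-1, by ring⟩)
  rw [Ideal.mem_span_singleton] at hea
  rcases IsIdempotentElem.iff_eq_zero_or_one.mp he with rfl | rfl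
  · right
    exact isUnit_one_sub_of_mul_one_sub_dvd (by simpa using hea)
  · left
    have h : (1 - a) * (1 - (1 - a)) ∣ 1 - a := by rwa [sub_sub_cancel, mul_comm]
    simpa using isUnit_one_sub_of_mul_one_sub_dvd h

theorem not_field_and_local_of_compact_domain_general
    (A : Type*) [CommRing A] [IsDomain A] [Infinite A]
    [TopologicalSpace A] [IsTopologicalRing A] [CompactSpace A] [T2Space A] :
    ¬ IsField A ∧ IsLocalRing A :=
  ⟨not_isField_of_compactSpace A, isLocalRing_of_compactSpace A⟩

/-- An infinite compact Hausdorff integral domain in which every nonzero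
principal ideal has finite index is not a field, and is a local ring. -/
theorem not_field_and_local_of_compact_domain
    (A : Type*) [CommRing A] [IsDomain A] [Infinite A]
    [TopologicalSpace A] [IsTopologicalRing A] [CompactSpace A] [T2Space A]
    (hprin : ∀ a : A, a ≠ 0 → Finite (A ⧸ Ideal.span {a})) :
    ¬ IsField A ∧ IsLocalRing A :=
  not_field_and_local_of_compact_domain_general A
end
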